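/- For every real β ≥ 1 and every P > 0, the improper integral 2·∫_{β/P}^{∞} [ (x + (β+1))/(2Δ(x)) − 1/(2√(Δ(x))) ] dx converges and equals σ₀²(P). -/

import Mathlib

open MeasureTheory

/-- `Δ(x) = x² + 2(β+1)x + (β−1)²`. -/
noncomputable def Δ (β x : ℝ) : ℝ := x ^ 2 + 2 * (β + 1) * x + (β - 1) ^ 2

/-- `a = (√β − 1)²`. -/
noncomputable def a (β : ℝ) : ℝ := (Real.sqrt β - 1) ^ 2

/-- `b = (√β + 1)²`. -/
noncomputable def b (β : ℝ) : ℝ := (Real.sqrt β + 1) ^ 2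

/-- The leading-order asymptotic variance `σ₀²(P)`. -/
noncomputable def sigma0sq (β P : ℝ) : ℝ :=
  2 * Real.log ((((β + a β * P) / (β + b β * P)) ^ ((1 : ℝ) / 4) +
    ((β + b β * P) / (β + a β * P)) ^ ((1 : ℝ) / 4)) / 2)

theorem stmt6 (β : ℝ) (hβ : 1 ≤ β) (P : ℝ) (hP : 0 < P) :
    IntegrableOn (fun x => 2 * ((x + (β + 1)) / (2 * Δ β x) - 1 / (2 * Real.sqrt (Δ β x))))
        (Set.Ioi (β / P)) volume ∧
      ∫ x in Set.Ioi (β / P),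
          2 * ((x + (β + 1)) / (2 * Δ β x) - 1 / (2 * Real.sqrt (Δ β x))) = sigma0sq β P := by
  have hβ0 : (0:ℝ) ≤ β := le_trans zero_le_one hβ
  have hc0 : 0 < β / P := div_pos (lt_of_lt_of_le one_pos hβ) hP
  set c := β / P with hc
  have hΔpos : ∀ x : ℝ, 0 < x → 0 < Δ β x := by
    intro x hx
    have h1 : 0 < 2 * (β + 1) * x := by nlinarith
    unfold Δ
    nlinarith [sq_nonneg x, sq_nonneg (β - 1)]
  -- the antiderivative
  set g : ℝ → ℝ := fun x => Real.log (Δ β x) / 2 - Real.log (x + β + 1 + Real.sqrt (Δ β x))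
    with hgdef
  have hderiv : ∀ x : ℝ, 0 < x →
      HasDerivAt g (2 * ((x + (β + 1)) / (2 * Δ β x) - 1 / (2 * Real.sqrt (Δ β x)))) x := by
    intro x hx
    have hΔx := hΔpos x hx
    have hs : 0 < Real.sqrt (Δ β x) := Real.sqrt_pos.mpr hΔx
    have hs2 : Real.sqrt (Δ β x) ^ 2 = Δ β x := Real.sq_sqrt hΔx.le
    have hh : 0 < x + β + 1 + Real.sqrt (Δ β x) := by linarith
    have hΔ' : HasDerivAt (Δ β) (2 * x + 2 * (β + 1)) x := by
      have h1 := ((hasDerivAt_pow 2 x).add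
        ((hasDerivAt_id x).const_mul (2 * (β + 1)))).add_const ((β - 1) ^ 2)
      have h2 : ((2:ℕ):ℝ) * x ^ (2 - 1) + 2 * (β + 1) * 1 = 2 * x + 2 * (β + 1) := by
        push_cast; ring
      rw [h2] at h1
      exact h1
    have hsd : HasDerivAt (fun y => Real.sqrt (Δ β y))
        ((2 * x + 2 * (β + 1)) / (2 * Real.sqrt (Δ β x))) x := hΔ'.sqrt hΔx.ne'
    have hlog1 : HasDerivAt (fun y => Real.log (Δ β y)) ((2 * x + 2 * (β + 1)) / Δ β x) x :=
      hΔ'.log hΔx.ne'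
    have hh' : HasDerivAt (fun y => y + β + 1 + Real.sqrt (Δ β y))
        (1 + (2 * x + 2 * (β + 1)) / (2 * Real.sqrt (Δ β x))) x :=
      (((hasDerivAt_id x).add_const β).add_const 1).add hsd
    have hlog2 : HasDerivAt (fun y => Real.log (y + β + 1 + Real.sqrt (Δ β y)))
        ((1 + (2 * x + 2 * (β + 1)) / (2 * Real.sqrt (Δ β x))) /
          (x + β + 1 + Real.sqrt (Δ β x))) x := hh'.log hh.ne'
    have hgd := (hlog1.div_const 2).sub hlog2
    have hval : (2 * x + 2 * (β + 1)) / Δ β x / 2 -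
        (1 + (2 * x + 2 * (β + 1)) / (2 * Real.sqrt (Δ β x))) /
          (x + β + 1 + Real.sqrt (Δ β x)) =
        2 * ((x + (β + 1)) / (2 * Δ β x) - 1 / (2 * Real.sqrt (Δ β x))) := by
      rw [← hs2]
      set s := Real.sqrt (Δ β x)
      field_simp
      ring
    rw [hval] at hgd
    exact hgd
  have hnonneg : ∀ x ∈ Set.Ioi c, 0 ≤
      2 * ((x + (β + 1)) / (2 * Δ β x) - 1 / (2 * Real.sqrt (Δ β x))) := by
    intro x hx
    have hx0 : 0 < x := lt_trans hc0 hx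
    have hΔx := hΔpos x hx0
    have hs : 0 < Real.sqrt (Δ β x) := Real.sqrt_pos.mpr hΔx
    have hs2 : Real.sqrt (Δ β x) ^ 2 = Δ β x := Real.sq_sqrt hΔx.le
    have hsle : Real.sqrt (Δ β x) ≤ x + β + 1 := by
      rw [show x + β + 1 = Real.sqrt ((x + β + 1) ^ 2) from
        (Real.sqrt_sq (by linarith)).symm]
      apply Real.sqrt_le_sqrt
      unfold Δ; nlinarith
    have key : 1 / (2 * Real.sqrt (Δ β x)) ≤ (x + (β + 1)) / (2 * Δ β x) := by
      rw [div_le_div_iff₀ (by positivity) (by positivity)]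
      nlinarith
    linarith
  -- tendsto
  have hΔtop : Filter.Tendsto (fun x => Δ β x) Filter.atTop Filter.atTop := by
    apply Filter.tendsto_atTop_mono' Filter.atTop _ Filter.tendsto_id
    filter_upwards [Filter.eventually_ge_atTop 1] with x hx
    simp only [id_eq]
    unfold Δ
    nlinarith [sq_nonneg (β - 1), mul_nonneg (sub_nonneg.mpr hx) (le_trans zero_le_one hx),
      mul_nonneg (show (0:ℝ) ≤ β + 1 by linarith) (le_trans zero_le_one hx)]
  have h4β : Filter.Tendsto (fun x => 4 * β / Δ β x) Filter.atTop (nhds 0) := by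
    have := hΔtop.inv_tendsto_atTop.const_mul (4 * β)
    simpa [div_eq_mul_inv] using this
  have ht1 : Filter.Tendsto (fun x => Real.sqrt (1 + 4 * β / Δ β x)) Filter.atTop (nhds 1) := by
    have h0 : Filter.Tendsto (fun x => 1 + 4 * β / Δ β x) Filter.atTop (nhds 1) := by
      simpa using tendsto_const_nhds.add h4β
    have := (Real.continuous_sqrt.continuousAt (x := (1:ℝ))).tendsto.comp h0
    simpa [Function.comp_def] using this
  have htt : Filter.Tendsto (fun x => (x + β + 1) / Real.sqrt (Δ β x)) Filter.atTop (nhds 1) := by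
    apply ht1.congr'
    filter_upwards [Filter.eventually_gt_atTop 0] with x hx
    have hΔx := hΔpos x hx
    have h1 : 1 + 4 * β / Δ β x = (x + β + 1) ^ 2 / Δ β x := by
      field_simp
      unfold Δ; ring
    rw [h1, Real.sqrt_div (by positivity) _, Real.sqrt_sq (by linarith)]
  have hq : Filter.Tendsto
      (fun x => Real.sqrt (Δ β x) / (x + β + 1 + Real.sqrt (Δ β x))) Filter.atTop
      (nhds (1 / 2)) := by
    have h2 : Filter.Tendsto
        (fun x => (x + β + 1 + Real.sqrt (Δ β x)) / Real.sqrt (Δ β x)) Filter.atTop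
        (nhds 2) := by
      have h3 : Filter.Tendsto (fun x => (x + β + 1) / Real.sqrt (Δ β x) + 1) Filter.atTop
          (nhds 2) := by
        have := htt.add (tendsto_const_nhds (α := ℝ) (x := (1:ℝ)) (f := Filter.atTop))
        norm_num at this
        exact this
      apply h3.congr'
      filter_upwards [Filter.eventually_gt_atTop 0] with x hx
      have hs : 0 < Real.sqrt (Δ β x) := Real.sqrt_pos.mpr (hΔpos x hx)
      field_simp
    have := h2.inv₀ (by norm_num)
    simpa [inv_div, one_div] using this
  have htend : Filter.Tendsto g Filter.atTop (nhds (Real.log (1 / 2))) := by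
    have := (Real.continuousAt_log (by norm_num : (1/2:ℝ) ≠ 0)).tendsto.comp hq
    apply this.congr'
    filter_upwards [Filter.eventually_gt_atTop 0] with x hx
    have hΔx := hΔpos x hx
    have hs : 0 < Real.sqrt (Δ β x) := Real.sqrt_pos.mpr hΔx
    have hh : 0 < x + β + 1 + Real.sqrt (Δ β x) := by linarith
    simp only [Function.comp_apply, hgdef]
    rw [Real.log_div hs.ne' hh.ne', Real.log_sqrt hΔx.le]
  have hcont : ContinuousWithinAt g (Set.Ici c) c :=
    (hderiv c hc0).continuousAt.continuousWithinAt
  have hderiv' : ∀ x ∈ Set.Ioi c, HasDerivAt g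
      (2 * ((x + (β + 1)) / (2 * Δ β x) - 1 / (2 * Real.sqrt (Δ β x)))) x :=
    fun x hx => hderiv x (lt_trans hc0 hx)
  constructor
  · exact integrableOn_Ioi_deriv_of_nonneg hcont hderiv' hnonneg htend
  · rw [integral_Ioi_of_hasDerivAt_of_nonneg hcont hderiv' hnonneg htend]
    -- final algebra
    have hΔc := hΔpos c hc0
    have hs : 0 < Real.sqrt (Δ β c) := Real.sqrt_pos.mpr hΔc
    have hh : 0 < c + β + 1 + Real.sqrt (Δ β c) := by linarith
    have ht : Real.sqrt β ^ 2 = β := Real.sq_sqrt hβ0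
    have ha0 : (0:ℝ) ≤ a β := sq_nonneg _
    have hb0 : (0:ℝ) ≤ b β := sq_nonneg _
    have hA : 0 < c + a β := by linarith
    have hB : 0 < c + b β := by linarith
    have hPA : β + a β * P = P * (c + a β) := by
      rw [hc]; field_simp
    have hPB : β + b β * P = P * (c + b β) := by
      rw [hc]; field_simp
    have hrA : (β + a β * P) / (β + b β * P) = (c + a β) / (c + b β) := by
      rw [hPA, hPB, mul_div_mul_left _ _ hP.ne']
    have hrB : (β + b β * P) / (β + a β * P) = (c + b β) / (c + a β) := by
      rw [hPA, hPB, mul_div_mul_left _ _ hP.ne']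
    have hq4 : ∀ z : ℝ, 0 ≤ z → z ^ ((1:ℝ)/4) = Real.sqrt (Real.sqrt z) := by
      intro z hz
      rw [Real.sqrt_eq_rpow, Real.sqrt_eq_rpow, ← Real.rpow_mul hz]
      norm_num
    have hABΔ : (c + a β) * (c + b β) = Δ β c := by
      unfold a b Δ
      linear_combination (2 * c + Real.sqrt β ^ 2 + β - 2) * ht
    have hABsum : (c + a β) + (c + b β) = 2 * c + 2 * β + 2 := by
      unfold a b
      linear_combination 2 * ht
    set u := Real.sqrt (Real.sqrt (c + a β)) with hu
    set v := Real.sqrt (Real.sqrt (c + b β)) with hv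
    have hu0 : 0 < u := Real.sqrt_pos.mpr (Real.sqrt_pos.mpr hA)
    have hv0 : 0 < v := Real.sqrt_pos.mpr (Real.sqrt_pos.mpr hB)
    have hu4 : u ^ 4 = c + a β := by
      rw [hu, show (4:ℕ) = 2 * 2 from rfl, pow_mul, Real.sq_sqrt (Real.sqrt_nonneg _),
        Real.sq_sqrt hA.le]
    have hv4 : v ^ 4 = c + b β := by
      rw [hv, show (4:ℕ) = 2 * 2 from rfl, pow_mul, Real.sq_sqrt (Real.sqrt_nonneg _),
        Real.sq_sqrt hB.le]
    have hsuv : Real.sqrt (Δ β c) = u ^ 2 * v ^ 2 := by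
      rw [hu, hv, Real.sq_sqrt (Real.sqrt_nonneg _), Real.sq_sqrt (Real.sqrt_nonneg _),
        ← Real.sqrt_mul hA.le, hABΔ]
    have hterm1 : ((c + a β) / (c + b β)) ^ ((1:ℝ)/4) = u / v := by
      rw [hq4 _ (by positivity), Real.sqrt_div hA.le, Real.sqrt_div (Real.sqrt_nonneg _)]
    have hterm2 : ((c + b β) / (c + a β)) ^ ((1:ℝ)/4) = v / u := by
      rw [hq4 _ (by positivity), Real.sqrt_div hB.le, Real.sqrt_div (Real.sqrt_nonneg _)]
    have hsigma : sigma0sq β P = Real.log (((u / v + v / u) / 2) ^ 2) := by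
      unfold sigma0sq
      rw [hrA, hrB, hterm1, hterm2, Real.log_pow]
      push_cast; ring
    have hWval : ((u / v + v / u) / 2) ^ 2 =
        (c + β + 1 + Real.sqrt (Δ β c)) / (2 * Real.sqrt (Δ β c)) := by
      rw [hsuv]
      have h24 : u ^ 4 + v ^ 4 = 2 * c + 2 * β + 2 := by rw [hu4, hv4]; linarith
      have e1 : ((u / v + v / u) / 2) ^ 2 = (u ^ 2 + v ^ 2) ^ 2 / (4 * (u ^ 2 * v ^ 2)) := by
        field_simp; ring
      rw [e1, div_eq_div_iff (by positivity) (by positivity)]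
      linear_combination (2 * u ^ 2 * v ^ 2) * h24
    have hgc : g c = Real.log (Δ β c) / 2 - Real.log (c + β + 1 + Real.sqrt (Δ β c)) := rfl
    rw [hsigma, hWval, hgc]
    rw [Real.log_div hh.ne' (by positivity), Real.log_mul two_ne_zero hs.ne',
      ← Real.log_sqrt hΔc.le, Real.log_div one_ne_zero two_ne_zero, Real.log_one]
    ring
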